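/- Let K = {x ∈ ℝ^n : p_i(x) = 0, i = 1,…,l, q_j(x) ≤ 0, j = 1,…,m} be nonempty and convex, where all p_i, q_j are polynomials, let f be a polynomial of degree d ≥ 1 with Sol(K,f) nonempty, and suppose OP(K,f) is regular (Sol(K∞, f_d) is bounded). Then the optimal value function φ(g) = inf{g(x) : x ∈ K} is locally Lipschitz continuous at f: there exist ε > 0 and L > 0 such that |φ(g) − φ(f)| ≤ L‖g − f‖ for all g ∈ P_d with ‖g − f‖ < ε. -/

import Mathlib

/-!
Regularity makes `f_d` positive on `K∞ \ {0}`: it is nonnegative there because `f` is bounded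
below on `K`, and a zero `v ≠ 0` would put the whole ray `ℝ₊ v` into `Sol(K∞, f_d)`. Hence, for `g`
close to `f`, no point of `K` far from the origin does better than a minimizer `x*` of `f`:
otherwise such points, normalized, would converge to a direction `v ∈ K∞` with `f_d(v) ≤ 0`.
So `inf_K g` is decided on a fixed ball `‖x‖ ≤ R`, where `|g - f| ≤ C R^d ‖g - f‖`, and
comparing with `g(x*)` gives the Lipschitz bound.
-/

open Filter Topology MvPolynomial Bornology
open scoped RealInnerProductSpace Pointwise

noncomputable section

/-- `ℝ^n` as Euclidean space. -/
abbrev En (n : ℕ) := EuclideanSpace ℝ (Fin n)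

/-- Evaluation of a multivariate polynomial at a point of `ℝ^n`. -/
def evalP {n : ℕ} (f : MvPolynomial (Fin n) ℝ) (x : En n) : ℝ :=
  MvPolynomial.eval (fun i => x i) f

/-- `Sol(C,g)`: the set of global minimizers of `g` on `C`. -/
def solSet {n : ℕ} (C : Set (En n)) (g : En n → ℝ) : Set (En n) :=
  {x ∈ C | ∀ y ∈ C, g x ≤ g y}

/-- `K∞`: the asymptotic cone of `K`. -/
def asympCone {n : ℕ} (K : Set (En n)) : Set (En n) :=
  {v | ∃ (t : ℕ → ℝ) (x : ℕ → En n), (∀ k, x k ∈ K) ∧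
    Tendsto t atTop atTop ∧ Tendsto (fun k => (t k)⁻¹ • x k) atTop (𝓝 v)}

/-- The gradient `∇f` of a polynomial, via its partial derivatives. -/
def polyGrad {n : ℕ} (f : MvPolynomial (Fin n) ℝ) (x : En n) : En n :=
  WithLp.toLp 2 (fun i => MvPolynomial.eval (fun j => x j) (MvPolynomial.pderiv i f))

/-- The `ℓ2`-norm of the coefficient vector of a polynomial. -/
def l2Norm {n : ℕ} (p : MvPolynomial (Fin n) ℝ) : ℝ :=
  Real.sqrt (∑ m ∈ p.support, (MvPolynomial.coeff m p) ^ 2)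

/-- `S` is generic (residual) in `X`: it contains a countable intersection of sets, each of
which is open and dense in `X` (with respect to the `ℓ2` coefficient metric). -/
def IsGenericIn {n : ℕ} (X S : Set (MvPolynomial (Fin n) ℝ)) : Prop :=
  ∃ D : ℕ → Set (MvPolynomial (Fin n) ℝ),
    (∀ k, D k ⊆ X ∧
      (∀ g ∈ D k, ∃ ε > 0, ∀ g' ∈ X, l2Norm (g' - g) < ε → g' ∈ D k) ∧
      (∀ g ∈ X, ∀ ε > 0, ∃ g' ∈ D k, l2Norm (g' - g) < ε)) ∧
    X ∩ (⋂ k, D k) ⊆ S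

section Bounds

variable {n : ℕ}

lemma evalP_sub (g f : MvPolynomial (Fin n) ℝ) (x : En n) :
    evalP (g - f) x = evalP g x - evalP f x := by
  simp only [evalP, map_sub]

lemma continuous_evalP (f : MvPolynomial (Fin n) ℝ) : Continuous (evalP f) :=
  (MvPolynomial.continuous_eval f).comp (continuous_pi fun i => PiLp.continuous_apply 2 _ i)

lemma l2Norm_nonneg (p : MvPolynomial (Fin n) ℝ) : 0 ≤ l2Norm p := Real.sqrt_nonneg _

lemma abs_coeff_le_l2Norm (p : MvPolynomial (Fin n) ℝ) (α : Fin n →₀ ℕ) :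
    |coeff α p| ≤ l2Norm p := by
  by_cases h : α ∈ p.support
  · rw [← Real.sqrt_sq_eq_abs]
    exact Real.sqrt_le_sqrt
      (Finset.single_le_sum (f := fun β => coeff β p ^ 2) (fun β _ => sq_nonneg _) h)
  · rw [notMem_support_iff.mp h, abs_zero]
    exact l2Norm_nonneg p

lemma abs_prod_pow_le (x : En n) (α : Fin n →₀ ℕ) : |∏ i, x i ^ α i| ≤ ‖x‖ ^ α.degree := by
  rw [Finset.abs_prod, Finsupp.degree_eq_sum, ← Finset.prod_pow_eq_pow_sum]
  gcongr with i
  rw [abs_pow]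
  gcongr
  exact PiLp.norm_apply_le x i

lemma prod_smul_pow (c : ℝ) (x : En n) (α : Fin n →₀ ℕ) :
    ∏ i, (c • x) i ^ α i = c ^ α.degree * ∏ i, x i ^ α i := by
  simp only [PiLp.smul_apply, smul_eq_mul, mul_pow, Finset.prod_mul_distrib,
    Finset.prod_pow_eq_pow_sum, Finsupp.degree_eq_sum]

end Bounds

theorem exists_abs_evalP_le (n d : ℕ) :
    ∃ C > 0, ∀ p : MvPolynomial (Fin n) ℝ, p.totalDegree ≤ d →
      ∀ {R : ℝ}, 1 ≤ R → ∀ x : En n, ‖x‖ ≤ R → |evalP p x| ≤ C * R ^ d * l2Norm p := by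
  set box : Finset (Fin n →₀ ℕ) := Finset.Iic (Finsupp.equivFunOnFinite.symm fun _ => d)
  refine ⟨box.card + 1, by positivity, fun p hp R hR x hx => ?_⟩
  have hdeg : ∀ α ∈ p.support, α.degree ≤ d := fun α hα =>
    (le_totalDegree hα).trans hp
  have hsupp : p.support ⊆ box := fun α hα => Finset.mem_Iic.mpr fun i =>
    (Finsupp.le_degree i α).trans (hdeg α hα)
  have hterm : ∀ α ∈ p.support, |coeff α p * ∏ i, x i ^ α i| ≤ R ^ d * l2Norm p := by
    intro α hα
    rw [abs_mul, mul_comm]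
    gcongr
    · exact (abs_prod_pow_le x α).trans
        ((pow_le_pow_left₀ (norm_nonneg x) hx _).trans (pow_le_pow_right₀ hR (hdeg α hα)))
    · exact abs_coeff_le_l2Norm p α
  calc |evalP p x| ≤ ∑ α ∈ p.support, |coeff α p * ∏ i, x i ^ α i| := by
        rw [evalP, eval_eq']
        exact Finset.abs_sum_le_sum_abs _ _
    _ ≤ p.support.card * (R ^ d * l2Norm p) := by
        simpa using Finset.sum_le_sum hterm
    _ ≤ (box.card + 1) * R ^ d * l2Norm p := by
        rw [mul_assoc]
        refine mul_le_mul_of_nonneg_right ?_ (mul_nonneg (by positivity) (l2Norm_nonneg p))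
        exact_mod_cast (Finset.card_le_card hsupp).trans (Nat.le_succ _)

section Asymptotics

variable {n d : ℕ}

lemma evalP_smul_of_isHomogeneous {φ : MvPolynomial (Fin n) ℝ} {j : ℕ} (hφ : φ.IsHomogeneous j)
    (c : ℝ) (x : En n) : evalP φ (c • x) = c ^ j * evalP φ x := by
  rw [evalP, evalP, eval_eq', eval_eq', Finset.mul_sum]
  refine Finset.sum_congr rfl fun α hα => ?_
  rw [prod_smul_pow, Finsupp.degree_apply, ← hφ.degree_eq_sum_deg_support hα]
  ring

lemma evalP_smul_eq_sum {f : MvPolynomial (Fin n) ℝ} (hf : f.totalDegree ≤ d) (c : ℝ) (x : En n) :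
    evalP f (c • x) = ∑ j ∈ Finset.range (d + 1), c ^ j * evalP (homogeneousComponent j f) x := by
  have hsum : ∑ j ∈ Finset.range (d + 1), homogeneousComponent j f = f := by
    rw [← Finset.sum_subset (Finset.range_subset_range.mpr (Nat.succ_le_succ hf)) fun j _ hj =>
      homogeneousComponent_eq_zero j f (by simp at hj; omega)]
    exact sum_homogeneousComponent f
  conv_lhs => rw [← hsum]
  simp only [evalP, map_sum]
  exact Finset.sum_congr rfl fun j _ =>
    evalP_smul_of_isHomogeneous (homogeneousComponent_isHomogeneous j f) c x

lemma tendsto_evalP_div_pow {f : MvPolynomial (Fin n) ℝ} (hf : f.totalDegree ≤ d)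
    {t : ℕ → ℝ} {y : ℕ → En n} {v : En n} (ht : Tendsto t atTop atTop)
    (hy : Tendsto (fun k => (t k)⁻¹ • y k) atTop (𝓝 v)) :
    Tendsto (fun k => evalP f (y k) / t k ^ d) atTop (𝓝 (evalP (homogeneousComponent d f) v)) := by
  have hlim : Tendsto
      (fun k => ∑ j ∈ Finset.range (d + 1),
        (t k)⁻¹ ^ (d - j) * evalP (homogeneousComponent j f) ((t k)⁻¹ • y k)) atTop
      (𝓝 (∑ j ∈ Finset.range (d + 1), 0 ^ (d - j) * evalP (homogeneousComponent j f) v)) :=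
    tendsto_finsetSum _ fun j _ =>
      (ht.inv_tendsto_atTop.pow _).mul (((continuous_evalP _).tendsto v).comp hy)
  rw [Finset.sum_eq_single_of_mem d (by simp) fun j hj hjd => by
    rw [zero_pow (by simp at hj; omega), zero_mul], Nat.sub_self, pow_zero, one_mul] at hlim
  refine hlim.congr' ?_
  filter_upwards [ht.eventually_gt_atTop 0] with k hk
  conv_rhs => rw [← smul_inv_smul₀ hk.ne' (y k)]
  rw [evalP_smul_eq_sum hf, Finset.sum_div]
  refine Finset.sum_congr rfl fun j hj => ?_
  rw [inv_pow, pow_sub₀ _ hk.ne' (by simp at hj; omega)]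
  field_simp

lemma tendsto_evalP_sub_div_pow {g : ℕ → MvPolynomial (Fin n) ℝ} {f : MvPolynomial (Fin n) ℝ}
    (hg : ∀ k, (g k).totalDegree ≤ d) (hf : f.totalDegree ≤ d)
    (hgf : Tendsto (fun k => l2Norm (g k - f)) atTop (𝓝 0)) {t : ℕ → ℝ} {x : ℕ → En n}
    (ht : ∀ᶠ k in atTop, 1 ≤ t k) (hxt : ∀ᶠ k in atTop, ‖x k‖ ≤ t k) :
    Tendsto (fun k => (evalP (g k) (x k) - evalP f (x k)) / t k ^ d) atTop (𝓝 0) := by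
  obtain ⟨C, -, hC⟩ := exists_abs_evalP_le n d
  refine squeeze_zero_norm' ?_ (by simpa using hgf.const_mul C)
  filter_upwards [ht, hxt] with k ht hxt
  have htd : 0 < t k ^ d := by positivity
  rw [Real.norm_eq_abs, abs_div, abs_of_pos htd, div_le_iff₀ htd, ← evalP_sub]
  calc |evalP (g k - f) (x k)| ≤ C * t k ^ d * l2Norm (g k - f) :=
        hC _ ((totalDegree_sub _ _).trans (max_le (hg k) hf)) ht _ hxt
    _ = C * l2Norm (g k - f) * t k ^ d := by ring

end Asymptotics

section AsymptoticCone

variable {n d : ℕ} {K : Set (En n)}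

lemma smul_mem_asympCone {v : En n} (hv : v ∈ asympCone K) {c : ℝ} (hc : 0 < c) :
    c • v ∈ asympCone K := by
  obtain ⟨t, x, hxK, ht, hx⟩ := hv
  refine ⟨fun k => c⁻¹ * t k, x, hxK, ht.const_mul_atTop (inv_pos.mpr hc), ?_⟩
  convert hx.const_smul c using 2 with k
  rw [mul_inv, inv_inv, mul_smul]

lemma evalP_homogeneousComponent_nonneg_of_forall_le (hd : 1 ≤ d)
    {f : MvPolynomial (Fin n) ℝ} (hf : f.totalDegree ≤ d) {b : ℝ} (hb : ∀ y ∈ K, b ≤ evalP f y)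
    {w : En n} (hw : w ∈ asympCone K) : 0 ≤ evalP (homogeneousComponent d f) w := by
  obtain ⟨s, y, hyK, hs, hyw⟩ := hw
  have hsd : Tendsto (fun k => s k ^ d) atTop atTop := (tendsto_pow_atTop (by omega)).comp hs
  refine le_of_tendsto_of_tendsto ((tendsto_const_nhds (x := b)).div_atTop hsd)
    (tendsto_evalP_div_pow hf hs hyw) ?_
  filter_upwards [hsd.eventually_gt_atTop 0] with k hk
  exact div_le_div_of_nonneg_right (hb _ (hyK k)) hk.le

lemma evalP_homogeneousComponent_pos {f : MvPolynomial (Fin n) ℝ}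
    (hnn : ∀ w ∈ asympCone K, 0 ≤ evalP (homogeneousComponent d f) w)
    (hreg : IsBounded (solSet (asympCone K) (evalP (homogeneousComponent d f))))
    {v : En n} (hv : v ∈ asympCone K) (hv0 : v ≠ 0) : 0 < evalP (homogeneousComponent d f) v := by
  refine (hnn v hv).lt_of_ne fun h0 => ?_
  have hray : ∀ c : ℝ, 0 < c → c • v ∈ solSet (asympCone K) (evalP (homogeneousComponent d f)) :=
    fun c hc => ⟨smul_mem_asympCone hv hc, fun w hw => by
      rw [evalP_smul_of_isHomogeneous (homogeneousComponent_isHomogeneous d f), ← h0, mul_zero]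
      exact hnn w hw⟩
  obtain ⟨r, hr⟩ := isBounded_iff_forall_norm_le.mp hreg
  have hv' : 0 < ‖v‖ := norm_pos_iff.mpr hv0
  have := hr _ (hray ((|r| + 1) / ‖v‖) (by positivity))
  rw [norm_smul, Real.norm_of_nonneg (by positivity), div_mul_cancel₀ _ hv'.ne'] at this
  linarith [le_abs_self r]

end AsymptoticCone

section Stability

variable {n d : ℕ}

lemma evalP_homogeneousComponent_nonpos_of_tendsto (hd : 1 ≤ d) {f : MvPolynomial (Fin n) ℝ}
    (hf : f.totalDegree ≤ d) {g : ℕ → MvPolynomial (Fin n) ℝ} (hg : ∀ k, (g k).totalDegree ≤ d)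
    (hgf : Tendsto (fun k => l2Norm (g k - f)) atTop (𝓝 0)) {x : ℕ → En n} {xs v : En n}
    (hx : Tendsto (fun k => ‖x k‖) atTop atTop)
    (hxv : Tendsto (fun k => ‖x k‖⁻¹ • x k) atTop (𝓝 v))
    (hle : ∀ k, evalP (g k) (x k) ≤ evalP (g k) xs) :
    evalP (homogeneousComponent d f) v ≤ 0 := by
  have hx1 : ∀ᶠ k in atTop, 1 ≤ ‖x k‖ := hx.eventually_ge_atTop 1
  have hxd : Tendsto (fun k => ‖x k‖ ^ d) atTop atTop := (tendsto_pow_atTop (by omega)).comp hx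
  have hfar : Tendsto (fun k => evalP (g k) (x k) / ‖x k‖ ^ d) atTop
      (𝓝 (evalP (homogeneousComponent d f) v)) := by
    have := (tendsto_evalP_div_pow hf hx hxv).add
      (tendsto_evalP_sub_div_pow hg hf hgf hx1 (Eventually.of_forall fun k => le_rfl))
    rw [add_zero] at this
    exact this.congr fun k => by ring
  have hnear : Tendsto (fun k => evalP (g k) xs / ‖x k‖ ^ d) atTop (𝓝 0) := by
    have := ((tendsto_const_nhds (x := evalP f xs)).div_atTop hxd).add
      (tendsto_evalP_sub_div_pow hg hf hgf hx1 (hx.eventually_ge_atTop ‖xs‖))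
    rw [add_zero] at this
    exact this.congr fun k => by ring
  exact le_of_tendsto_of_tendsto hfar hnear
    (Eventually.of_forall fun k => div_le_div_of_nonneg_right (hle k) (by positivity))

theorem exists_evalP_le_of_norm_ge (hd : 1 ≤ d) {K : Set (En n)} {f : MvPolynomial (Fin n) ℝ}
    (hf : f.totalDegree ≤ d) {xs : En n} (hxs : xs ∈ solSet K (evalP f))
    (hreg : IsBounded (solSet (asympCone K) (evalP (homogeneousComponent d f)))) :
    ∃ R : ℝ, ∃ ε > 0, ∀ g : MvPolynomial (Fin n) ℝ, g.totalDegree ≤ d → l2Norm (g - f) < ε →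
      ∀ x ∈ K, R ≤ ‖x‖ → evalP g xs ≤ evalP g x := by
  have hpos : ∀ v ∈ asympCone K, v ≠ 0 → 0 < evalP (homogeneousComponent d f) v :=
    fun v hv hv0 => evalP_homogeneousComponent_pos
      (fun w hw => evalP_homogeneousComponent_nonneg_of_forall_le hd hf hxs.2 hw) hreg hv hv0
  by_contra! h
  choose g hg hgf x hxK hxR hlt using fun k : ℕ => h (k + 1) (1 / (k + 1)) (by positivity)
  have hx : Tendsto (fun k => ‖x k‖) atTop atTop :=
    tendsto_atTop_mono hxR (tendsto_atTop_add_const_right _ 1 tendsto_natCast_atTop_atTop)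
  have hsph : ∀ k, ‖x k‖⁻¹ • x k ∈ Metric.sphere (0 : En n) 1 := fun k => by
    have hxk : x k ≠ 0 := norm_pos_iff.mp ((by positivity : (0 : ℝ) < k + 1).trans_le (hxR k))
    simp [norm_smul, hxk]
  obtain ⟨v, hv, φ, hφ, hxv⟩ := (isCompact_sphere (0 : En n) 1).tendsto_subseq hsph
  have hgf' : Tendsto (fun k => l2Norm (g k - f)) atTop (𝓝 0) :=
    squeeze_zero (fun k => l2Norm_nonneg _) (fun k => (hgf k).le)
      tendsto_one_div_add_atTop_nhds_zero_nat
  have hφ' := hφ.tendsto_atTop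
  have hvK : v ∈ asympCone K := ⟨_, _, fun k => hxK (φ k), hx.comp hφ', hxv⟩
  have hv0 : v ≠ 0 := by rintro rfl; simp at hv
  exact (hpos v hvK hv0).not_ge <| evalP_homogeneousComponent_nonpos_of_tendsto hd hf
    (fun k => hg (φ k)) (hgf'.comp hφ') (hx.comp hφ') hxv (fun k => (hlt (φ k)).le)

end Stability

lemma csInf_image_eq_of_mem_solSet {n : ℕ} {K : Set (En n)} {g : En n → ℝ} {xs : En n}
    (hxs : xs ∈ solSet K g) : sInf (g '' K) = g xs :=
  IsLeast.csInf_eq ⟨Set.mem_image_of_mem g hxs.1, by rintro _ ⟨y, hy, rfl⟩; exact hxs.2 y hy⟩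

lemma bddBelow_and_abs_csInf_sub_le {S : Set ℝ} {b e y : ℝ} (hlow : ∀ z ∈ S, b - e ≤ z)
    (hy : y ∈ S) (hyb : y ≤ b + e) : BddBelow S ∧ |sInf S - b| ≤ e := by
  have hbdd : BddBelow S := ⟨b - e, hlow⟩
  exact ⟨hbdd, abs_sub_le_iff.mpr
    ⟨by linarith [csInf_le hbdd hy], by linarith [le_csInf ⟨y, hy⟩ hlow]⟩⟩

theorem stmt14_general {n d : ℕ} (hd : 1 ≤ d)
    (K : Set (En n))
    (f : MvPolynomial (Fin n) ℝ) (hdeg : f.totalDegree = d)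
    (hSolne : (solSet K (evalP f)).Nonempty)
    (hreg : IsBounded (solSet (asympCone K) (evalP (homogeneousComponent d f)))) :
    ∃ ε > (0 : ℝ), ∃ L > (0 : ℝ),
      ∀ g : MvPolynomial (Fin n) ℝ, g.totalDegree ≤ d → l2Norm (g - f) < ε →
        BddBelow (evalP g '' K) ∧
        |sInf (evalP g '' K) - sInf (evalP f '' K)| ≤ L * l2Norm (g - f) := by
  obtain ⟨xs, hxs⟩ := hSolne
  obtain ⟨R₀, ε, hε, hfar⟩ := exists_evalP_le_of_norm_ge hd hdeg.le hxs hreg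
  obtain ⟨C, hC, hbound⟩ := exists_abs_evalP_le n d
  set R := max 1 (max R₀ ‖xs‖)
  refine ⟨ε, hε, C * R ^ d, by positivity, fun g hg hgf => ?_⟩
  have hnear : ∀ x : En n, ‖x‖ ≤ R → |evalP g x - evalP f x| ≤ C * R ^ d * l2Norm (g - f) :=
    fun x hx => evalP_sub g f x ▸
      hbound _ ((totalDegree_sub g f).trans (max_le hg hdeg.le)) (le_max_left _ _) x hx
  have hxs_near := abs_le.mp (hnear xs (le_max_of_le_right (le_max_right _ _)))
  rw [csInf_image_eq_of_mem_solSet hxs]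
  refine bddBelow_and_abs_csInf_sub_le ?_ (Set.mem_image_of_mem _ hxs.1) (by linarith)
  rintro _ ⟨x, hxK, rfl⟩
  by_cases hxR : ‖x‖ ≤ R
  · linarith [hxs.2 x hxK, (abs_le.mp (hnear x hxR)).1]
  · have hR₀ : R₀ ≤ ‖x‖ := (le_max_of_le_right (le_max_left _ _)).trans (not_le.mp hxR).le
    linarith [hfar g hg hgf x hxK hR₀]

/-- If `K` is a nonempty convex set defined by polynomial equalities and inequalities, `f` has
degree `d ≥ 1`, `Sol(K,f) ≠ ∅`, and `OP(K,f)` is regular, then the optimal value function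
`φ(g) = inf_K g` is (finite and) locally Lipschitz continuous at `f`. -/
theorem stmt14 {n d l m : ℕ} (hd : 1 ≤ d)
    (p : Fin l → MvPolynomial (Fin n) ℝ) (q : Fin m → MvPolynomial (Fin n) ℝ)
    (K : Set (En n))
    (hK : K = {x | (∀ i, evalP (p i) x = 0) ∧ (∀ j, evalP (q j) x ≤ 0)})
    (hKne : K.Nonempty) (hKcv : Convex ℝ K)
    (f : MvPolynomial (Fin n) ℝ) (hdeg : f.totalDegree = d)
    (hSolne : (solSet K (evalP f)).Nonempty)
    (hreg : IsBounded (solSet (asympCone K) (evalP (homogeneousComponent d f)))) :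
    ∃ ε > (0 : ℝ), ∃ L > (0 : ℝ),
      ∀ g : MvPolynomial (Fin n) ℝ, g.totalDegree ≤ d → l2Norm (g - f) < ε →
        BddBelow (evalP g '' K) ∧
        |sInf (evalP g '' K) - sInf (evalP f '' K)| ≤ L * l2Norm (g - f) :=
  stmt14_general hd K f hdeg hSolne hreg

end
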